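/- Let G be a group in which every maximal subgroup is normal, with d(G) = 2, and suppose G/G' is isomorphic to C_p × C_p for some prime p. Then any lift of any generating set of G/G' is a total dominating set for Δ(G): if x, y ∈ G are such that their images generate G/G', then every non-isolated vertex g of Γ(G) satisfies ⟨g, x⟩ = G or ⟨g, y⟩ = G. -/

import Mathlib

/-- The generating graph of a group `G`: vertices are group elements, with distinct
nontrivial `x, y` adjacent iff they generate `G` (the identity is isolated). -/
def genGraph (G : Type*) [Group G] : SimpleGraph G where
  Adj x y := x ≠ y ∧ x ≠ 1 ∧ y ≠ 1 ∧ Subgroup.closure ({x, y} : Set G) = ⊤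
  symm := by
    constructor
    rintro x y ⟨hxy, hx, hy, h⟩
    exact ⟨hxy.symm, hy, hx, by rwa [Set.pair_comm]⟩
  loopless := ⟨fun x h => h.1 rfl⟩

/-- The set of non-isolated vertices of the generating graph. -/
def nonIso (G : Type*) [Group G] : Set G := {v | ∃ w, (genGraph G).Adj v w}

/-- `Δ(G)`: the induced subgraph of the generating graph on its non-isolated vertices. -/
def deltaGraph (G : Type*) [Group G] : SimpleGraph (nonIso G) :=
  (genGraph G).induce (nonIso G)



open Subgroup

/-- In a finitely generated group, every proper subgroup lies under a coatom. -/
lemma exists_coatom_above {G : Type*} [Group G] (a b : G)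
    (hgen : Subgroup.closure ({a, b} : Set G) = ⊤)
    (H : Subgroup G) (hH : H ≠ ⊤) : ∃ M : Subgroup G, IsCoatom M ∧ H ≤ M := by
  have hchain : ∀ c ⊆ {K : Subgroup G | K ≠ ⊤}, IsChain (· ≤ ·) c → ∀ y ∈ c,
      ∃ ub ∈ {K : Subgroup G | K ≠ ⊤}, ∀ z ∈ c, z ≤ ub := by
    intro c hcs hc y hy
    refine ⟨⨆ K : c, (K : Subgroup G), ?_,
      fun z hz => le_iSup (fun K : c => (K : Subgroup G)) ⟨z, hz⟩⟩
    intro htop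
    haveI : Nonempty c := ⟨⟨y, hy⟩⟩
    have hdir : Directed (· ≤ ·) (fun K : c => (K : Subgroup G)) := by
      intro K₁ K₂
      rcases hc.total K₁.2 K₂.2 with h | h
      · exact ⟨K₂, h, le_rfl⟩
      · exact ⟨K₁, le_rfl, h⟩
    have ha : a ∈ (⨆ K : c, (K : Subgroup G)) := htop ▸ mem_top a
    have hb : b ∈ (⨆ K : c, (K : Subgroup G)) := htop ▸ mem_top b
    obtain ⟨K₁, hK₁⟩ := (Subgroup.mem_iSup_of_directed hdir).mp ha
    obtain ⟨K₂, hK₂⟩ := (Subgroup.mem_iSup_of_directed hdir).mp hb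
    obtain ⟨K₃, h₁, h₂⟩ := hdir K₁ K₂
    have : (K₃ : Subgroup G) = ⊤ := by
      rw [← top_le_iff, ← hgen, Subgroup.closure_le]
      rintro z (rfl | rfl)
      · exact h₁ hK₁
      · exact h₂ hK₂
    exact hcs K₃.2 this
  obtain ⟨M, hHM, hM⟩ := zorn_le_nonempty₀ _ hchain H hH
  exact ⟨M, ⟨hM.prop, fun K hK => Classical.byContradiction fun hKtop =>
    hK.ne (le_antisymm hK.le (hM.le_of_ge hKtop hK.le))⟩, hHM⟩

open Subgroup

lemma not_cyclic_of_card_sq {B : Type*} [Group B] {p : ℕ} (hp : p.Prime)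
    (hcard : Nat.card B = p ^ 2) (hexp : ∀ b : B, b ^ p = 1) (b : B) :
    Subgroup.closure ({b} : Set B) ≠ ⊤ := by
  intro htop
  have h1 : orderOf b ∣ p := orderOf_dvd_of_pow_eq_one (hexp b)
  rw [← Subgroup.zpowers_eq_closure] at htop
  have h3 : orderOf b = p ^ 2 := by
    rw [← Nat.card_zpowers, htop, ← hcard]
    exact Nat.card_congr Subgroup.topEquiv.toEquiv
  rw [h3] at h1
  have := Nat.le_of_dvd hp.pos h1
  nlinarith [hp.two_le]

lemma pair_one_closure {B : Type*} [Group B] (v : B)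
    (h : Subgroup.closure ({1, v} : Set B) = ⊤) : Subgroup.closure ({v} : Set B) = ⊤ := by
  refine le_antisymm le_top ?_
  rw [← h, Subgroup.closure_le]
  intro z hz
  simp only [Set.mem_insert_iff, Set.mem_singleton_iff] at hz
  rcases hz with rfl | rfl
  · exact one_mem _
  · exact Subgroup.subset_closure rfl

lemma key_pair {B : Type*} [Group B] {p : ℕ} (hp : p.Prime)
    (hcard : Nat.card B = p ^ 2) (hexp : ∀ b : B, b ^ p = 1)
    {u v w : B} (huv : Subgroup.closure ({u, v} : Set B) = ⊤) (hw : w ≠ 1) :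
    Subgroup.closure ({w, u} : Set B) = ⊤ ∨ Subgroup.closure ({w, v} : Set B) = ⊤ := by
  haveI : Finite B := Nat.finite_of_card_ne_zero (by
    rw [hcard]; exact pow_ne_zero 2 hp.pos.ne')
  have horder : ∀ b : B, b ≠ 1 → orderOf b = p := by
    intro b hb
    rcases (Nat.Prime.eq_one_or_self_of_dvd hp _ (orderOf_dvd_of_pow_eq_one (hexp b))) with h | h
    · exact absurd (orderOf_eq_one_iff.mp h) hb
    · exact h
  have hcardzp : ∀ b : B, b ≠ 1 → Nat.card (Subgroup.zpowers b) = p := by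
    intro b hb; rw [Nat.card_zpowers, horder b hb]
  have hu : u ≠ 1 := by
    rintro rfl
    exact not_cyclic_of_card_sq hp hcard hexp v (pair_one_closure v huv)
  have hv : v ≠ 1 := by
    rintro rfl
    rw [Set.pair_comm] at huv
    exact not_cyclic_of_card_sq hp hcard hexp u (pair_one_closure u huv)
  have hnotboth : w ∉ Subgroup.zpowers u ∨ w ∉ Subgroup.zpowers v := by
    by_contra hcon
    push_neg at hcon
    obtain ⟨h1, h2⟩ := hcon
    have e1 : Subgroup.zpowers w = Subgroup.zpowers u := by
      apply Subgroup.eq_of_le_of_card_ge (Subgroup.zpowers_le.mpr h1)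
      rw [hcardzp w hw, hcardzp u hu]
    have e2 : Subgroup.zpowers w = Subgroup.zpowers v := by
      apply Subgroup.eq_of_le_of_card_ge (Subgroup.zpowers_le.mpr h2)
      rw [hcardzp w hw, hcardzp v hv]
    have hle : Subgroup.closure ({u, v} : Set B) ≤ Subgroup.zpowers w := by
      rw [Subgroup.closure_le]
      intro z hz
      simp only [Set.mem_insert_iff, Set.mem_singleton_iff] at hz
      rcases hz with rfl | rfl
      · rw [e1]; exact Subgroup.mem_zpowers _
      · rw [e2]; exact Subgroup.mem_zpowers _
    rw [huv] at hle
    refine not_cyclic_of_card_sq hp hcard hexp w ?_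
    rw [← Subgroup.zpowers_eq_closure]
    exact le_antisymm le_top hle
  have main : ∀ z : B, z ≠ 1 → w ∉ Subgroup.zpowers z →
      Subgroup.closure ({w, z} : Set B) = ⊤ := by
    intro z hz hwz
    set H := Subgroup.closure ({w, z} : Set B) with hH
    have hzH : Subgroup.zpowers z ≤ H := Subgroup.zpowers_le.mpr
      (Subgroup.subset_closure (by simp))
    have hwH : w ∈ H := Subgroup.subset_closure (by simp)
    have hdvd : Nat.card H ∣ p ^ 2 := hcard ▸ Subgroup.card_subgroup_dvd_card H
    obtain ⟨m, hm2, hmeq⟩ := (Nat.dvd_prime_pow hp).mp hdvd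
    have hpdvd : p ∣ Nat.card H := by
      rw [← hcardzp z hz]
      exact Subgroup.card_dvd_of_le hzH
    interval_cases m
    · exfalso
      rw [pow_zero] at hmeq
      rw [hmeq] at hpdvd
      have := Nat.le_of_dvd one_pos hpdvd
      have := hp.two_le
      omega
    · exfalso
      rw [pow_one] at hmeq
      have : Subgroup.zpowers z = H :=
        Subgroup.eq_of_le_of_card_ge hzH (by rw [hmeq, hcardzp z hz])
      exact hwz (this ▸ hwH)
    · exact (Subgroup.card_eq_iff_eq_top H).mp (by rw [hmeq, hcard])
  rcases hnotboth with h | h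
  · exact Or.inl (main u hu h)
  · exact Or.inr (main v hv h)

open Subgroup

lemma coatom_contains_commutator {G : Type*} [Group G] (M : Subgroup G)
    (hM : IsCoatom M) (hN : M.Normal) : commutator G ≤ M := by
  haveI := hN
  have hcyc : ∀ q : G ⧸ M, q ≠ 1 → Subgroup.zpowers q = ⊤ := by
    intro q hq
    obtain ⟨a, rfl⟩ := QuotientGroup.mk'_surjective M q
    set K := Subgroup.comap (QuotientGroup.mk' M) (Subgroup.zpowers (QuotientGroup.mk' M a))
      with hK
    have hMK : M < K := by
      constructor
      · intro m hm
        show (QuotientGroup.mk' M) m ∈ Subgroup.zpowers ((QuotientGroup.mk' M) a)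
        have h1 : (QuotientGroup.mk' M) m = 1 := (QuotientGroup.eq_one_iff m).mpr hm
        rw [h1]; exact one_mem _
      · intro hle
        exact hq ((QuotientGroup.eq_one_iff a).mpr (hle (Subgroup.mem_zpowers _)))
    have hKtop : K = ⊤ := hM.2 K hMK
    have := congrArg (Subgroup.map (QuotientGroup.mk' M)) hKtop
    rwa [Subgroup.map_comap_eq_self_of_surjective (QuotientGroup.mk'_surjective M),
      Subgroup.map_top_of_surjective _ (QuotientGroup.mk'_surjective M)] at this
  have hcomm : ∀ q r : G ⧸ M, q * r = r * q := by
    intro q r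
    by_cases hq : q = 1
    · rw [hq, one_mul, mul_one]
    · obtain ⟨n, rfl⟩ := (hcyc q hq).symm ▸ Subgroup.mem_top r
      exact ((Commute.refl q).zpow_right n).eq
  rw [_root_.commutator_def, Subgroup.commutator_le]
  intro g₁ _ g₂ _
  rw [← QuotientGroup.eq_one_iff, ← QuotientGroup.mk'_apply, map_commutatorElement,
    commutatorElement_eq_one_iff_mul_comm]
  exact hcomm _ _

lemma lift_gen {G : Type*} [Group G]
    (hMN : ∀ M : Subgroup G, IsCoatom M → M.Normal)
    (a b : G) (hgen : Subgroup.closure ({a, b} : Set G) = ⊤) {g x : G}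
    (htop : Subgroup.closure
      ({Abelianization.of g, Abelianization.of x} : Set (Abelianization G)) = ⊤) :
    Subgroup.closure ({g, x} : Set G) = ⊤ := by
  by_contra hne
  obtain ⟨M, hM, hle⟩ := exists_coatom_above a b hgen _ hne
  have hcomm : commutator G ≤ M := coatom_contains_commutator M hM (hMN M hM)
  have hker : (Abelianization.of : G →* Abelianization G).ker ≤ M := by
    intro z hz
    have h1 : z ∈ commutator G := (QuotientGroup.eq_one_iff z).mp hz
    exact hcomm h1
  have hmap : Subgroup.map Abelianization.of M = ⊤ := by
    rw [eq_top_iff, ← htop, ← Set.image_pair, ← MonoidHom.map_closure]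
    exact Subgroup.map_mono hle
  have : M = ⊤ := by
    rw [← Subgroup.comap_map_eq_self hker, hmap, Subgroup.comap_top]
  exact hM.1 this

theorem lift_of_generating_set_is_total_dominating
    {G : Type*} [Group G]
    (hMN : ∀ M : Subgroup G, IsCoatom M → M.Normal)
    (h2 : ∃ x y : G, Subgroup.closure ({x, y} : Set G) = ⊤)
    (hnc : ¬ ∃ x : G, Subgroup.closure ({x} : Set G) = ⊤)
    (p : ℕ) (hp : p.Prime)
    (hab : Nonempty (Abelianization G ≃* Multiplicative (ZMod p × ZMod p)))
    (x y : G)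
    (hxy : Subgroup.closure
      ({Abelianization.of x, Abelianization.of y} : Set (Abelianization G)) = ⊤) :
    ∀ g : G, g ∈ nonIso G →
      Subgroup.closure ({g, x} : Set G) = ⊤ ∨ Subgroup.closure ({g, y} : Set G) = ⊤ := by
  intro g hg
  obtain ⟨w, hadj⟩ := hg
  obtain ⟨-, -, -, hgw⟩ := hadj
  obtain ⟨a, b, hgen⟩ := h2
  obtain ⟨e⟩ := hab
  haveI : Fact p.Prime := ⟨hp⟩
  -- cardinality of the abelianization
  have hcard : Nat.card (Abelianization G) = p ^ 2 := by
    rw [Nat.card_congr e.toEquiv]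
    simp [Nat.card_eq_fintype_card, sq]
  -- exponent p
  have hexp : ∀ z : Abelianization G, z ^ p = 1 := by
    intro z
    apply e.injective
    rw [map_pow, map_one]
    have h : ∀ t : Multiplicative (ZMod p × ZMod p), t ^ p = 1 := by
      intro t
      rw [← ofAdd_toAdd t, ← ofAdd_nsmul]
      have : p • t.toAdd = 0 := by
        ext <;> simp [nsmul_eq_mul, ZMod.natCast_self]
      rw [this]
      rfl
    exact h _
  -- surjectivity of the abelianization map
  have hsurj : Function.Surjective (Abelianization.of : G →* Abelianization G) :=
    fun q => Quotient.inductionOn' q fun z => ⟨z, rfl⟩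
  -- images of generating pairs generate
  have himg : ∀ s t : G, Subgroup.closure ({s, t} : Set G) = ⊤ →
      Subgroup.closure ({Abelianization.of s, Abelianization.of t} :
        Set (Abelianization G)) = ⊤ := by
    intro s t h
    rw [← Set.image_pair, ← MonoidHom.map_closure, h,
      Subgroup.map_top_of_surjective _ hsurj]
  -- the image of g is nontrivial
  have hg1 : (Abelianization.of g : Abelianization G) ≠ 1 := by
    intro h1
    have h2' := himg g w hgw
    rw [h1] at h2'
    exact not_cyclic_of_card_sq hp hcard hexp _ (pair_one_closure _ h2')
  rcases key_pair hp hcard hexp hxy hg1 with h | h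
  · exact Or.inl (lift_gen hMN a b hgen h)
  · exact Or.inr (lift_gen hMN a b hgen h)
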